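/- Let A : X → X, C : X → Y be linear, and W ⊆ X a subspace. Then W is (C,A)-invariant (i.e., there exists L : Y → X with (A + L∘C) W ⊆ W) if and only if A(W ∩ ker C) ⊆ W. -/
import Mathlib


theorem stmt_13 (X Y : Type*) [AddCommGroup X] [Module ℝ X] [AddCommGroup Y] [Module ℝ Y]
    [FiniteDimensional ℝ X] [FiniteDimensional ℝ Y]
    (A : X →ₗ[ℝ] X) (C : X →ₗ[ℝ] Y) (W : Submodule ℝ X) :
    (∃ L : Y →ₗ[ℝ] X, W.map (A + L ∘ₗ C) ≤ W) ↔
      (W ⊓ LinearMap.ker C).map A ≤ W := by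
  constructor
  · rintro ⟨L, hL⟩ x hx
    rcases hx with ⟨w, hw, rfl⟩
    obtain ⟨hwW, hwK⟩ := hw
    have h1 : (A + L ∘ₗ C) w ∈ W := hL ⟨w, hwW, rfl⟩
    have h2 : (A + L ∘ₗ C) w = A w := by
      simp [LinearMap.mem_ker.mp hwK]
    rwa [h2] at h1
  · intro h
    obtain ⟨W', hW'⟩ := Submodule.exists_isCompl (W ⊓ LinearMap.ker C)
    have hsup : (W ⊓ LinearMap.ker C) ⊔ (W ⊓ W') = W := by
      have h1 : ((W ⊓ LinearMap.ker C) ⊔ W') ⊓ W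
          = (W ⊓ LinearMap.ker C) ⊔ (W' ⊓ W) :=
        sup_inf_assoc_of_le W' (inf_le_left : W ⊓ LinearMap.ker C ≤ W)
      rw [hW'.sup_eq_top, top_inf_eq] at h1
      rw [inf_comm W W']
      exact h1.symm
    -- C is injective on V := W ⊓ W'
    have hinj : Function.Injective (C.comp (W ⊓ W').subtype) := by
      rintro ⟨a, ha⟩ ⟨b, hb⟩ hab
      have hab' : C (a - b) = 0 := by
        simp only [LinearMap.comp_apply, Submodule.subtype_apply] at hab
        simp [map_sub, hab]
      have hmem : a - b ∈ (W ⊓ LinearMap.ker C) ⊓ W' :=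
        ⟨⟨W.sub_mem ha.1 hb.1, LinearMap.mem_ker.mpr hab'⟩, W'.sub_mem ha.2 hb.2⟩
      rw [hW'.inf_eq_bot] at hmem
      have : a - b = 0 := by simpa using hmem
      exact Subtype.ext (sub_eq_zero.mp this)
    obtain ⟨g, hg⟩ := (C.comp (W ⊓ W').subtype).exists_leftInverse_of_injective
      (LinearMap.ker_eq_bot.mpr hinj)
    refine ⟨-((A.comp (W ⊓ W').subtype).comp g), ?_⟩
    rintro x ⟨w, hwW, rfl⟩
    rw [← hsup] at hwW
    obtain ⟨k, hk, v, hv, rfl⟩ := Submodule.mem_sup.mp hwW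
    have hgv : (↑(g (C v)) : X) = v := by
      have := congrArg (fun f => f ⟨v, hv⟩) hg
      simp only [LinearMap.comp_apply, LinearMap.id_apply, Submodule.subtype_apply] at this
      exact congrArg Subtype.val this
    have hCk : C k = 0 := hk.2
    have hcalc : (A + (-((A.comp (W ⊓ W').subtype).comp g)) ∘ₗ C) (k + v) = A k := by
      simp only [LinearMap.add_apply, map_add, LinearMap.comp_apply,
        LinearMap.neg_apply, hCk, map_zero, neg_zero, Submodule.subtype_apply, hgv]
      abel
    rw [hcalc]
    exact h ⟨k, hk, rfl⟩
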